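/- arXiv:0907.1884 — 2 statements merged into one kernel-verified Lean document; each statement's English description precedes it below -/
import Mathlib

section
/- Let ψ₁, ψ₂ be linearly independent unit vectors in ℂ², let p₁, p₂ ≥ 0 with p₁ + p₂ = 1, and let W₁, W₂ > 0. Set c := |⟨ψ₁, ψ₂⟩| and s := √(1 − c²). Then the failure probability of the Belavkin weighted square-root measurement with weights W₁, W₂ equals (p₁ W₂ + p₂ W₁) c² / (W₁ + W₂ + 2 √(W₁ W₂) s). -/
open Matrix Filter
open scoped ComplexOrder

noncomputable section

/-- The rank-one projector `|ψ⟩⟨ψ|` as a matrix. -/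
def proj {d : ℕ} (ψ : Fin d → ℂ) : Matrix (Fin d) (Fin d) ℂ := vecMulVec ψ (star ψ)

/-- The (real) expectation value `⟨ψ, M ψ⟩`. -/
def expVal {d : ℕ} (M : Matrix (Fin d) (Fin d) ℂ) (ψ : Fin d → ℂ) : ℝ :=
  (star ψ ⬝ᵥ M *ᵥ ψ).re

/-- A POVM: a finite family of PSD matrices summing to the identity. -/
def IsPOVM {d m : ℕ} (M : Fin m → Matrix (Fin d) (Fin d) ℂ) : Prop :=
  (∀ k, (M k).PosSemidef) ∧ ∑ k, M k = 1

/-- The old Mathlib `Matrix.PosSemidef.sqrt` (removed from Mathlib), with its old definition. -/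
def posSemidefSqrt {n : Type*} [Fintype n] [DecidableEq n] {A : Matrix n n ℂ}
    (hA : A.PosSemidef) : Matrix n n ℂ :=
  (hA.1.eigenvectorUnitary : Matrix n n ℂ) * diagonal ((↑) ∘ Real.sqrt ∘ hA.1.eigenvalues) *
    (star hA.1.eigenvectorUnitary : Matrix n n ℂ)

/-!
For a positive definite `2 × 2` matrix `S` with trace `τ` and determinant `δ ^ 2`, Cayley–Hamilton
`S ^ 2 = τ S - δ ^ 2` shows that `(S + δ) / √(τ + 2δ)` squares to `S`, hence is its square root,
with inverse `((τ + δ) - S) / (δ √(τ + 2δ))`. For `S = W₁ |ψ₁⟩⟨ψ₁| + W₂ |ψ₂⟩⟨ψ₂|` one has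
`τ = W₁ + W₂` and `δ = √(W₁ W₂) s`, so `⟨ψ₁, S^{-1/2} ψ₁⟩ = (W₂ s² + δ) / (δ √(τ + 2δ))`, and the
success probability `W₁ ⟨ψ₁, S^{-1/2} ψ₁⟩²` of the first state simplifies to
`1 - W₂ c² / (τ + 2δ)`; symmetrically for the second state.
-/

theorem Matrix.mul_self_fin_two {R : Type*} [CommRing R] [Nontrivial R]
    (A : Matrix (Fin 2) (Fin 2) R) : A * A = A.trace • A - A.det • 1 := by
  have h := A.aeval_self_charpoly
  rw [charpoly_fin_two] at h
  simp only [map_add, map_sub, map_pow, Polynomial.aeval_X, map_mul, Polynomial.aeval_C,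
    Algebra.algebraMap_eq_smul_one, smul_mul_assoc, one_mul] at h
  rw [← sq, ← sub_eq_zero, ← h]
  abel

open scoped MatrixOrder in
theorem posSemidefSqrt_eq_cfcSqrt {n : Type*} [Fintype n] [DecidableEq n] {A : Matrix n n ℂ}
    (hA : A.PosSemidef) : posSemidefSqrt hA = CFC.sqrt A := by
  rw [CFC.sqrt_eq_cfc, cfc_nnreal_eq_real _ A hA.nonneg, hA.1.cfc_eq]
  simp only [IsHermitian.cfc, Unitary.conjStarAlgAut_apply, posSemidefSqrt]
  congr 3
  funext i
  simp only [Function.comp_apply, Real.coe_sqrt, Real.coe_toNNReal _ (hA.eigenvalues_nonneg i)]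
  rfl

section FinTwo

variable {A : Matrix (Fin 2) (Fin 2) ℂ} {τ δ : ℝ}

open scoped MatrixOrder in
theorem posSemidefSqrt_fin_two (hA : A.PosSemidef) (hτ : A.trace = τ) (hδ : 0 ≤ δ)
    (hdet : A.det = δ ^ 2) (hpos : 0 < τ + 2 * δ) :
    posSemidefSqrt hA = ((√(τ + 2 * δ))⁻¹ : ℂ) • (A + (δ : ℂ) • 1) := by
  rw [posSemidefSqrt_eq_cfcSqrt]
  refine CFC.sqrt_unique ?_ ?_
  · set u := √(τ + 2 * δ)
    have hu2 : (u : ℂ) ^ 2 = τ + 2 * δ := by exact_mod_cast Real.sq_sqrt hpos.le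
    have hu0 : (u : ℂ) ≠ 0 := by exact_mod_cast (Real.sqrt_pos.2 hpos).ne'
    rw [smul_mul_smul_comm, add_mul, mul_add, mul_add, A.mul_self_fin_two, hτ, hdet]
    simp only [smul_mul_assoc, mul_smul_comm, one_mul, mul_one, smul_smul]
    match_scalars
    · field_simp
      linear_combination -hu2
    · ring
  · rw [nonneg_iff_posSemidef]
    refine (hA.add (PosSemidef.one.smul ?_)).smul ?_
    · exact_mod_cast hδ
    · exact_mod_cast inv_nonneg.2 (Real.sqrt_nonneg _)

theorem inv_posSemidefSqrt_fin_two (hA : A.PosSemidef) (hτ : A.trace = τ) (hδ : 0 < δ)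
    (hdet : A.det = δ ^ 2) :
    (posSemidefSqrt hA)⁻¹ = ((δ * √(τ + 2 * δ))⁻¹ : ℂ) • (((τ + δ : ℝ) : ℂ) • 1 - A) := by
  have hτ0 : 0 ≤ τ := by exact_mod_cast hτ ▸ hA.trace_nonneg
  have hpos : 0 < τ + 2 * δ := by linarith
  refine inv_eq_right_inv ?_
  rw [posSemidefSqrt_fin_two hA hτ hδ.le hdet hpos, smul_mul_smul_comm, add_mul, mul_sub,
    mul_sub, A.mul_self_fin_two, hτ, hdet]
  set u := √(τ + 2 * δ)
  have hu2 : (u : ℂ) ^ 2 = τ + 2 * δ := by exact_mod_cast Real.sq_sqrt hpos.le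
  have hu0 : (u : ℂ) ≠ 0 := by exact_mod_cast (Real.sqrt_pos.2 hpos).ne'
  have hδ0 : (δ : ℂ) ≠ 0 := by exact_mod_cast hδ.ne'
  simp only [smul_mul_assoc, mul_smul_comm, one_mul, mul_one, smul_smul]
  match_scalars
  · field_simp
    ring
  · field_simp
    linear_combination -hu2

end FinTwo

section Projector

variable {d : ℕ}

theorem proj_mulVec (ψ v : Fin d → ℂ) : proj ψ *ᵥ v = (star ψ ⬝ᵥ v) • ψ := by
  rw [proj, vecMulVec_mulVec, op_smul_eq_smul]

theorem trace_proj (ψ : Fin d → ℂ) : (proj ψ).trace = star ψ ⬝ᵥ ψ := by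
  rw [proj, trace_vecMulVec, dotProduct_comm]

theorem dotProduct_mul_proj_mul_mulVec (A B : Matrix (Fin d) (Fin d) ℂ) (ψ x y : Fin d → ℂ) :
    x ⬝ᵥ (A * proj ψ * B) *ᵥ y = (x ⬝ᵥ A *ᵥ ψ) * (star ψ ⬝ᵥ B *ᵥ y) := by
  rw [← mulVec_mulVec, ← mulVec_mulVec, proj_mulVec, mulVec_smul, dotProduct_smul, smul_eq_mul,
    mul_comm]

theorem star_dotProduct_proj_mulVec_self (φ χ : Fin d → ℂ) :
    star φ ⬝ᵥ proj χ *ᵥ φ = (‖star φ ⬝ᵥ χ‖ : ℂ) ^ 2 := by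
  rw [proj_mulVec, dotProduct_smul, smul_eq_mul, star_dotProduct χ, mul_comm, Complex.star_def,
    Complex.mul_conj']

theorem trace_smul_proj_add_smul_proj {ψ φ : Fin d → ℂ} (hψ : star ψ ⬝ᵥ ψ = 1)
    (hφ : star φ ⬝ᵥ φ = 1) (W V : ℝ) : (W • proj ψ + V • proj φ).trace = (W + V : ℝ) := by
  rw [trace_add, trace_smul, trace_smul, trace_proj, trace_proj, hψ, hφ]
  simp [Complex.real_smul]

theorem star_dotProduct_smul_proj_add_smul_proj_mulVec_self {ψ : Fin d → ℂ}
    (hψ : star ψ ⬝ᵥ ψ = 1) (φ : Fin d → ℂ) (W V : ℝ) :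
    star ψ ⬝ᵥ (W • proj ψ + V • proj φ) *ᵥ ψ = (W + V * ‖star ψ ⬝ᵥ φ‖ ^ 2 : ℝ) := by
  rw [add_mulVec, smul_mulVec, smul_mulVec, dotProduct_add, dotProduct_smul, dotProduct_smul,
    star_dotProduct_proj_mulVec_self, star_dotProduct_proj_mulVec_self, hψ]
  simp only [norm_one, Complex.real_smul]
  push_cast
  ring

end Projector

theorem det_smul_proj_add_smul_proj (ψ φ : Fin 2 → ℂ) (W V : ℝ) :
    (W • proj ψ + V • proj φ).det
      = W * V * ((star ψ ⬝ᵥ ψ) * (star φ ⬝ᵥ φ) - (‖star ψ ⬝ᵥ φ‖ : ℂ) ^ 2) := by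
  rw [← Complex.mul_conj']
  simp [det_fin_two, proj, vecMulVec_apply, dotProduct, Fin.sum_univ_two, Complex.real_smul]
  ring

theorem expVal_bwsrm {ψ φ : Fin 2 → ℂ} (hψ : star ψ ⬝ᵥ ψ = 1) (hφ : star φ ⬝ᵥ φ = 1)
    {W V : ℝ} (hW : 0 < W) (hV : 0 < V) {S : Matrix (Fin 2) (Fin 2) ℂ}
    (hSdef : S = W • proj ψ + V • proj φ) (hS : S.PosDef) :
    expVal ((posSemidefSqrt hS.posSemidef)⁻¹ * (W • proj ψ) * (posSemidefSqrt hS.posSemidef)⁻¹) ψ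
      = 1 - V * ‖star ψ ⬝ᵥ φ‖ ^ 2 / (W + V + 2 * √(W * V) * √(1 - ‖star ψ ⬝ᵥ φ‖ ^ 2)) := by
  set c := ‖star ψ ⬝ᵥ φ‖
  set s := √(1 - c ^ 2)
  set r := √(W * V)
  have hτ : S.trace = (W + V : ℝ) := hSdef ▸ trace_smul_proj_add_smul_proj hψ hφ W V
  have hdetc : S.det = (W * V * (1 - c ^ 2) : ℝ) := by
    rw [hSdef, det_smul_proj_add_smul_proj, hψ, hφ]
    push_cast
    ring
  have hc : 0 < 1 - c ^ 2 := by
    have := hS.det_pos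
    rw [hdetc, Complex.zero_lt_real] at this
    exact pos_of_mul_pos_right this (mul_pos hW hV).le
  have hr : 0 < r := Real.sqrt_pos.2 (mul_pos hW hV)
  have hs : 0 < s := Real.sqrt_pos.2 hc
  have hr2 : r ^ 2 = W * V := Real.sq_sqrt (mul_pos hW hV).le
  have hs2 : s ^ 2 = 1 - c ^ 2 := Real.sq_sqrt hc.le
  have hdet : S.det = ((r * s : ℝ) : ℂ) ^ 2 := by
    rw [hdetc, ← Complex.ofReal_pow, mul_pow, hr2, hs2]
  have hRψ : star ψ ⬝ᵥ (posSemidefSqrt hS.posSemidef)⁻¹ *ᵥ ψ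
      = ((V * s ^ 2 + r * s) / (r * s * √(W + V + 2 * (r * s))) : ℝ) := by
    rw [inv_posSemidefSqrt_fin_two hS.posSemidef hτ (mul_pos hr hs) hdet, smul_mulVec,
      sub_mulVec, smul_mulVec, one_mulVec, dotProduct_smul, dotProduct_sub, dotProduct_smul, hψ,
      hSdef, star_dotProduct_smul_proj_add_smul_proj_mulVec_self hψ, hs2]
    simp only [smul_eq_mul]
    push_cast
    ring
  rw [expVal, mul_smul_comm, smul_mul_assoc, smul_mulVec, dotProduct_smul,
    dotProduct_mul_proj_mul_mulVec, hRψ, ← Complex.ofReal_mul, Complex.real_smul,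
    ← Complex.ofReal_mul, Complex.ofReal_re, mul_assoc 2 r s]
  set P := W + V + 2 * (r * s) with hPdef
  have hP : 0 < P := by positivity
  set u := √P
  have hu2 : u ^ 2 = P := Real.sq_sqrt hP.le
  have hu0 : 0 < u := Real.sqrt_pos.2 hP
  field_simp
  -- `W (V s + r)² = V (W + V s² + 2 r s)` once `r² = W V`
  linear_combination (-(P - V * c ^ 2) * r ^ 2) * hu2 - (P * r ^ 2) * hPdef
    + (P * (-V * (1 - c ^ 2) - 2 * r * s)) * hr2 + (P * W * V ^ 2) * hs2

theorem two_state_bwsrm_failure_general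
    (ψ₁ ψ₂ : Fin 2 → ℂ) (h1 : star ψ₁ ⬝ᵥ ψ₁ = 1) (h2 : star ψ₂ ⬝ᵥ ψ₂ = 1)
    (p₁ p₂ : ℝ) (hp : p₁ + p₂ = 1)
    (W₁ W₂ : ℝ) (hW1 : 0 < W₁) (hW2 : 0 < W₂)
    (hS : (W₁ • proj ψ₁ + W₂ • proj ψ₂).PosDef)
    (M₁ M₂ : Matrix (Fin 2) (Fin 2) ℂ)
    (hM1 : M₁ = (posSemidefSqrt hS.posSemidef)⁻¹ * (W₁ • proj ψ₁) * (posSemidefSqrt hS.posSemidef)⁻¹)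
    (hM2 : M₂ = (posSemidefSqrt hS.posSemidef)⁻¹ * (W₂ • proj ψ₂) * (posSemidefSqrt hS.posSemidef)⁻¹)
    (c s : ℝ) (hc : c = ‖star ψ₁ ⬝ᵥ ψ₂‖) (hs : s = Real.sqrt (1 - c ^ 2)) :
    1 - (p₁ * expVal M₁ ψ₁ + p₂ * expVal M₂ ψ₂)
      = (p₁ * W₂ + p₂ * W₁) * c ^ 2 / (W₁ + W₂ + 2 * Real.sqrt (W₁ * W₂) * s) := by
  have hc' : ‖star ψ₂ ⬝ᵥ ψ₁‖ = c := by rw [hc, star_dotProduct, norm_star]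
  rw [hM1, hM2, expVal_bwsrm h1 h2 hW1 hW2 rfl hS, expVal_bwsrm h2 h1 hW2 hW1 (add_comm _ _) hS,
    hc', ← hc, ← hs, add_comm W₂ W₁, mul_comm W₂ W₁]
  linear_combination -hp

/-- the failure probability of the Belavkin weighted square-root measurement
for two linearly independent pure states in `ℂ²` equals
`(p₁W₂ + p₂W₁)c² / (W₁ + W₂ + 2√(W₁W₂)s)`. -/
theorem two_state_bwsrm_failure
    (ψ₁ ψ₂ : Fin 2 → ℂ) (h1 : star ψ₁ ⬝ᵥ ψ₁ = 1) (h2 : star ψ₂ ⬝ᵥ ψ₂ = 1)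
    (hli : LinearIndependent ℂ ![ψ₁, ψ₂])
    (p₁ p₂ : ℝ) (hp1 : 0 ≤ p₁) (hp2 : 0 ≤ p₂) (hp : p₁ + p₂ = 1)
    (W₁ W₂ : ℝ) (hW1 : 0 < W₁) (hW2 : 0 < W₂)
    (hS : (W₁ • proj ψ₁ + W₂ • proj ψ₂).PosDef)
    (M₁ M₂ : Matrix (Fin 2) (Fin 2) ℂ)
    (hM1 : M₁ = (posSemidefSqrt hS.posSemidef)⁻¹ * (W₁ • proj ψ₁) * (posSemidefSqrt hS.posSemidef)⁻¹)
    (hM2 : M₂ = (posSemidefSqrt hS.posSemidef)⁻¹ * (W₂ • proj ψ₂) * (posSemidefSqrt hS.posSemidef)⁻¹)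
    (c s : ℝ) (hc : c = ‖star ψ₁ ⬝ᵥ ψ₂‖) (hs : s = Real.sqrt (1 - c ^ 2)) :
    1 - (p₁ * expVal M₁ ψ₁ + p₂ * expVal M₂ ψ₂)
      = (p₁ * W₂ + p₂ * W₁) * c ^ 2 / (W₁ + W₂ + 2 * Real.sqrt (W₁ * W₂) * s) :=
  two_state_bwsrm_failure_general ψ₁ ψ₂ h1 h2 p₁ p₂ hp W₁ W₂ hW1 hW2 hS M₁ M₂ hM1 hM2 c s hc hs
end
end

section
/- Fix p ∈ (0,1) and weights W₁, W₂ > 0, and set p₁ = p, p₂ = 1−p. If the limit as c → 0⁺ of F_W(p,c) / F_opt(p,c) equals 1, where F_W(p,c) = (p₁W₂ + p₂W₁)c²/(W₁ + W₂ + 2√(W₁W₂)√(1−c²)) and F_opt(p,c) = 1/2 − √(1/4 − p₁p₂c²), then W₁ p₂² = W₂ p₁², i.e. W₁/p₁² = W₂/p₂². In other words, a Belavkin weighted square-root measurement for binary ensembles is asymptotically optimal (its failure rate ratio to the optimum tends to 1 as the states approach orthogonality) only if its weights are proportional to the squares of the prior probabilities. -/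
/-!
Rationalising `1/2 - √(1/4 - p₁p₂c²) = p₁p₂c² / (1/2 + √(1/4 - p₁p₂c²))` cancels the factor `c²`
against the numerator of `F_W`, so the ratio `F_W / F_opt` extends continuously to `c = 0`, with value
`(p₁W₂ + p₂W₁) / ((√W₁ + √W₂)² p₁p₂)`. If this value is `1` then, since `p₁ + p₂ = 1`,
`0 = (p₁ + p₂)(p₁W₂ + p₂W₁) - p₁p₂(√W₁ + √W₂)² = (p₁√W₂ - p₂√W₁)²`.
-/

open Filter Topology Real

noncomputable section

def belavkinFailure (p₁ p₂ W₁ W₂ c : ℝ) : ℝ :=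
  (p₁*W₂ + p₂*W₁)*c^2 / (W₁ + W₂ + 2*√(W₁*W₂)*√(1-c^2))

def optimalFailure (p₁ p₂ c : ℝ) : ℝ :=
  1/2 - √(1/4 - p₁*p₂*c^2)

end

lemma half_sub_sqrt_quarter_sub {x : ℝ} (hx : x ≤ 1/4) :
    1/2 - √(1/4 - x) = x / (1/2 + √(1/4 - x)) := by
  have hpos : 0 < 1/2 + √(1/4 - x) := by positivity
  rw [eq_div_iff hpos.ne']
  nlinarith [Real.mul_self_sqrt (show 0 ≤ 1/4 - x by linarith)]

lemma belavkinFailure_div_optimalFailure {p₁ p₂ W₁ W₂ c : ℝ} (hc : c ≠ 0)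
    (hqc : p₁*p₂*c^2 ≤ 1/4) :
    belavkinFailure p₁ p₂ W₁ W₂ c / optimalFailure p₁ p₂ c =
      (p₁*W₂ + p₂*W₁) * (1/2 + √(1/4 - p₁*p₂*c^2)) /
        ((W₁ + W₂ + 2*√(W₁*W₂)*√(1-c^2)) * (p₁*p₂)) := by
  rw [belavkinFailure, optimalFailure, half_sub_sqrt_quarter_sub hqc, div_div_div_eq,
    mul_right_comm, ← mul_assoc]
  exact mul_div_mul_right _ _ (pow_ne_zero 2 hc)

lemma tendsto_belavkinFailure_div_optimalFailure (p₁ p₂ : ℝ) {W₁ W₂ : ℝ}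
    (hW : 0 < W₁ + W₂) :
    Tendsto (fun c => belavkinFailure p₁ p₂ W₁ W₂ c / optimalFailure p₁ p₂ c) (𝓝[≠] 0)
      (𝓝 ((p₁*W₂ + p₂*W₁) / ((W₁ + W₂ + 2*√(W₁*W₂)) * (p₁*p₂)))) := by
  set g : ℝ → ℝ := fun c => (p₁*W₂ + p₂*W₁) * (1/2 + √(1/4 - p₁*p₂*c^2)) /
    ((W₁ + W₂ + 2*√(W₁*W₂)*√(1-c^2)) * (p₁*p₂))
  have hsmall : ∀ᶠ c in 𝓝 (0 : ℝ), p₁*p₂*c^2 < 1/4 :=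
    (Continuous.tendsto (by fun_prop) 0).eventually (gt_mem_nhds (by norm_num))
  have hg_eq : g =ᶠ[𝓝[≠] 0] fun c => belavkinFailure p₁ p₂ W₁ W₂ c / optimalFailure p₁ p₂ c := by
    filter_upwards [self_mem_nhdsWithin, nhdsWithin_le_nhds hsmall] with c hc hqc
    exact (belavkinFailure_div_optimalFailure hc hqc.le).symm
  have hg0 : g 0 = (p₁*W₂ + p₂*W₁) / ((W₁ + W₂ + 2*√(W₁*W₂)) * (p₁*p₂)) := by
    have h₁ : √(1/4 - p₁*p₂*0^2) = 1/2 := by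
      rw [show 1/4 - p₁*p₂*0^2 = (1/2 : ℝ)^2 by ring, sqrt_sq (by norm_num)]
    have h₂ : √(1 - 0^2 : ℝ) = 1 := by norm_num
    simp only [g, h₁, h₂]
    norm_num
  refine hg0 ▸ Tendsto.congr' hg_eq ?_
  by_cases hq : p₁ * p₂ = 0
  -- `F_opt ≡ 0` here, and both `g` and the limit value are the junk value `x / 0 = 0`.
  · simp only [g, hq, mul_zero, div_zero]
    exact tendsto_const_nhds
  · have hD : 0 < W₁ + W₂ + 2*√(W₁*W₂)*√(1-0^2) := by positivity
    have hg : ContinuousAt g 0 := ContinuousAt.div (by fun_prop) (by fun_prop)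
      (mul_ne_zero hD.ne' hq)
    exact hg.tendsto.mono_left nhdsWithin_le_nhds

lemma mul_sq_eq_mul_sq_of_sum_eq_one {p₁ p₂ W₁ W₂ : ℝ} (hW₁ : 0 ≤ W₁) (hW₂ : 0 ≤ W₂)
    (hp : p₁ + p₂ = 1) (h : p₁*W₂ + p₂*W₁ = (W₁ + W₂ + 2*√(W₁*W₂)) * (p₁*p₂)) :
    W₁ * p₂^2 = W₂ * p₁^2 := by
  obtain ⟨a, ha, rfl⟩ : ∃ a, 0 ≤ a ∧ a^2 = W₁ := ⟨√W₁, sqrt_nonneg _, sq_sqrt hW₁⟩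
  obtain ⟨b, hb, rfl⟩ : ∃ b, 0 ≤ b ∧ b^2 = W₂ := ⟨√W₂, sqrt_nonneg _, sq_sqrt hW₂⟩
  rw [← mul_pow, sqrt_sq (mul_nonneg ha hb)] at h
  have hsq : (p₁*b - p₂*a)^2 = 0 := by
    linear_combination (p₁*b^2 + p₂*a^2) * hp + h
  have hlin : p₁*b = p₂*a := sub_eq_zero.mp (pow_eq_zero_iff two_ne_zero |>.mp hsq)
  linear_combination (-(p₁*b + p₂*a)) * hlin

theorem asymptotically_optimal_only_if_quadratic_general (p W₁ W₂ : ℝ)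
    (hW1 : 0 < W₁) (hW2 : 0 < W₂)
    (p₁ p₂ : ℝ) (hp1 : p₁ = p) (hp2 : p₂ = 1 - p)
    (hlim : Filter.Tendsto (fun c : ℝ =>
        ((p₁*W₂ + p₂*W₁)*c^2 / (W₁ + W₂ + 2*Real.sqrt (W₁*W₂)*Real.sqrt (1-c^2))) /
        (1/2 - Real.sqrt (1/4 - p₁*p₂*c^2)))
      (nhdsWithin 0 (Set.Ioi 0)) (nhds 1)) :
    W₁ * p₂^2 = W₂ * p₁^2 := by
  have hlim' : Tendsto _ (𝓝[>] (0 : ℝ)) _ :=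
    (tendsto_belavkinFailure_div_optimalFailure p₁ p₂ (add_pos hW1 hW2)).mono_left
      (nhdsWithin_mono 0 fun _ hc => ne_of_gt hc)
  have hval := tendsto_nhds_unique hlim' hlim
  have hden : (W₁ + W₂ + 2*√(W₁*W₂)) * (p₁*p₂) ≠ 0 := by
    rintro h0
    simp [h0] at hval
  refine mul_sq_eq_mul_sq_of_sum_eq_one hW1.le hW2.le (by rw [hp1, hp2]; ring) ?_
  exact (div_eq_one_iff_eq hden).mp hval

/-- converse to Holevo's asymptotic optimality theorem, binary case: if the
failure-rate ratio of a Belavkin weighted square-root measurement to the optimum tends to 1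
as the two states approach orthogonality, then the weights are proportional to the squares of
the priors: `W₁ p₂² = W₂ p₁²`. -/
theorem asymptotically_optimal_only_if_quadratic (p W₁ W₂ : ℝ) (hp : p ∈ Set.Ioo (0:ℝ) 1)
    (hW1 : 0 < W₁) (hW2 : 0 < W₂)
    (p₁ p₂ : ℝ) (hp1 : p₁ = p) (hp2 : p₂ = 1 - p)
    (hlim : Filter.Tendsto (fun c : ℝ =>
        ((p₁*W₂ + p₂*W₁)*c^2 / (W₁ + W₂ + 2*Real.sqrt (W₁*W₂)*Real.sqrt (1-c^2))) /
        (1/2 - Real.sqrt (1/4 - p₁*p₂*c^2)))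
      (nhdsWithin 0 (Set.Ioi 0)) (nhds 1)) :
    W₁ * p₂^2 = W₂ * p₁^2 :=
  asymptotically_optimal_only_if_quadratic_general p W₁ W₂ hW1 hW2 p₁ p₂ hp1 hp2 hlim
end
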